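/- arXiv:1903.02732 — 2 statements merged into one kernel-verified Lean document; each statement's English description precedes it below -/
import Mathlib

section
/- One has χ_n · M_1^{μ̃_n} = (−1)^n · χ_n^T, where χ_n^T is the transpose of χ_n; equivalently, since χ_n is invertible, M_1^{μ̃_n} = (−1)^n · χ_n^{−1} · χ_n^T. -/
/-!
Read a row vector as the window `(s (k - 1), …, s (k - μ))` of a two-sided sequence `s`. Right
multiplication by `M₁` advances the window by one step of the linear recurrence
`∑_{j ≤ μ} c'_j s (k - j) = 0`, which has `φ_n` as characteristic polynomial. Extended by zero to
negative indices, the sequence `c` of coefficients of `1 / φ_n` satisfies this recurrence except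
at `k = 0`. Since `t ^ μ φ_n (1 / t) = (-1) ^ (n + 1) φ_n (t)`, the reversed sequence `m ↦ c (-m)`
satisfies it except at `k = μ`, so `s m = c (-m) - (-1) ^ (n + 1) c (m - μ)` satisfies it
everywhere.
Row `i` of `χ_n` is the window of `s` at time `i + 1`, and `μ` steps later the window is
`(-1) ^ n` times row `i` of `χ_nᵀ`.

That `φ_n` is such a polynomial follows from `φ_{k+1} φ_k = 1 - t ^ d_{k+1}`: by induction, `φ_k` is
a polynomial dividing `1 - t ^ d_k`, hence `1 - t ^ d_{k+1}`, and the antipalindromy of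
`1 - t ^ d` passes from `φ_k` to the cofactor `φ_{k+1}` with the sign flipped.
-/

open Finset Matrix Polynomial FreeAbelianGroup

/-- `d k = a 1 * a 2 * ⋯ * a k`, with `d 0 = 1`. -/
def chainD (a : ℕ → ℕ) (k : ℕ) : ℕ := ∏ i ∈ Finset.Icc 1 k, a i

/-- `μ̃ 0 = 1`, `μ̃ k = d k - μ̃ (k-1)`. -/
def chainMu (a : ℕ → ℕ) : ℕ → ℤ
  | 0 => 1
  | k + 1 => (chainD a (k + 1) : ℤ) - chainMu a k

/-- `φ_n(t) = ∏_{i=0}^{n} (1 - t^{d_i})^{(-1)^{n-i}}` as a rational function over `ℚ`. -/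
noncomputable def chainPhi (a : ℕ → ℕ) (n : ℕ) : RatFunc ℚ :=
  ∏ i ∈ Finset.range (n + 1),
    ((1 : RatFunc ℚ) - RatFunc.X ^ (chainD a i)) ^ ((-1 : ℤ) ^ (n - i))

/-- the regular nilpotent `μ × μ` matrix -/
def nilpN (μ : ℕ) : Matrix (Fin μ) (Fin μ) ℚ :=
  Matrix.of fun i j => if (j : ℕ) = (i : ℕ) + 1 then 1 else 0

/-- `χ = ∑_{i=0}^{μ-1} c_i N^i` -/
noncomputable def chiMat (μ : ℕ) (c : ℕ → ℚ) : Matrix (Fin μ) (Fin μ) ℚ :=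
  ∑ i ∈ Finset.range μ, c i • (nilpN μ) ^ i

/-- the companion-type matrix `M₁`: `(M₁)_{i,1} = -c'_i`, `(M₁)_{i,i+1} = 1` (1-based). -/
def M1mat (μ : ℕ) (c' : ℕ → ℚ) : Matrix (Fin μ) (Fin μ) ℚ :=
  Matrix.of fun i j =>
    (if (j : ℕ) = 0 then -c' ((i : ℕ) + 1) else 0) +
    (if (j : ℕ) = (i : ℕ) + 1 then 1 else 0)

theorem nilpN_pow_apply (μ m : ℕ) (i j : Fin μ) :
    (nilpN μ ^ m) i j = if (j : ℕ) = i + m then 1 else 0 := by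
  induction m generalizing j with
  | zero => simp [one_apply, Fin.ext_iff, eq_comm]
  | succ m ih =>
    rw [pow_succ, mul_apply]
    by_cases h : i + m < μ
    · rw [Finset.sum_eq_single ⟨i + m, h⟩ (fun l _ hl => by
        rw [ih, if_neg fun h' => hl (Fin.ext h'), zero_mul]) (by simp)]
      rw [ih, if_pos rfl, one_mul, nilpN, of_apply]
      congr 1
    · rw [if_neg (by omega)]
      exact Finset.sum_eq_zero fun l _ => by rw [ih, if_neg (by omega), zero_mul]

def zeroExtend {α : Type*} [Zero α] (c : ℕ → α) (m : ℤ) : α := if 0 ≤ m then c m.toNat else 0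

section ZeroExtend

variable {α : Type*} [Zero α] {c : ℕ → α}

theorem zeroExtend_of_neg {m : ℤ} (hm : m < 0) : zeroExtend c m = 0 :=
  if_neg (by omega)

theorem zeroExtend_natCast_sub {i j : ℕ} (h : i ≤ j) : zeroExtend c ((j : ℤ) - i) = c (j - i) := by
  rw [zeroExtend, if_pos (by omega)]
  congr
  omega

end ZeroExtend

theorem chiMat_apply (μ : ℕ) (c : ℕ → ℚ) (i j : Fin μ) :
    chiMat μ c i j = zeroExtend c ((j : ℤ) - i) := by
  simp only [chiMat, Matrix.sum_apply, Matrix.smul_apply, nilpN_pow_apply, smul_eq_mul, mul_ite,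
    mul_one, mul_zero]
  by_cases hij : (i : ℕ) ≤ j
  · rw [zeroExtend_natCast_sub hij,
      Finset.sum_eq_single (j - i : ℕ) (fun l _ hl => if_neg (by omega))
        (fun h => by simp at h; omega), if_pos (by omega)]
  · rw [zeroExtend_of_neg (by omega)]
    exact Finset.sum_eq_zero fun l _ => if_neg (by omega)

theorem isUnit_chiMat {μ : ℕ} {c : ℕ → ℚ} (hc0 : c 0 ≠ 0) : IsUnit (chiMat μ c) := by
  rw [isUnit_iff_isUnit_det, det_of_isUpperTriangular fun i j (hij : j < i) => by
    rw [chiMat_apply, zeroExtend_of_neg (by omega)]]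
  simp [chiMat_apply, zeroExtend, hc0]

def window {α : Type*} (μ : ℕ) (s : ℤ → α) (k : ℤ) : Fin μ → α := fun j => s (k - 1 - j)

def recurrenceDefect {R : Type*} [Semiring R] (μ : ℕ) (c' : ℕ → R) (s : ℤ → R) (k : ℤ) : R :=
  ∑ j ∈ range (μ + 1), c' j * s (k - j)

section Recurrence

variable {R : Type*} [CommRing R] {μ : ℕ} {c' : ℕ → R} {s : ℤ → R}

theorem recurrenceDefect_comp_neg {ε : R} (hpal : ∀ j ≤ μ, c' (μ - j) = ε * c' j) (k : ℤ) :
    recurrenceDefect μ c' (fun m => s (-m)) k = ε * recurrenceDefect μ c' s (μ - k) := by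
  rw [recurrenceDefect, ← Finset.sum_range_reflect, recurrenceDefect, Finset.mul_sum]
  refine Finset.sum_congr rfl fun j hj => ?_
  have hj : j ≤ μ := Nat.lt_succ_iff.mp (Finset.mem_range.mp hj)
  rw [Nat.add_sub_cancel, hpal j hj, Nat.cast_sub hj]
  ring_nf

theorem recurrenceDefect_comp_sub (l k : ℤ) :
    recurrenceDefect μ c' (fun m => s (m - l)) k = recurrenceDefect μ c' s (k - l) := by
  simp only [recurrenceDefect, sub_right_comm]

theorem recurrenceDefect_zeroExtend {c : ℕ → R} (hc' : ∀ j, μ < j → c' j = 0)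
    (hconv : ∀ K : ℕ, ∑ j ∈ range (K + 1), c' j * c (K - j) = if K = 0 then 1 else 0) (k : ℤ) :
    recurrenceDefect μ c' (zeroExtend c) k = if k = 0 then 1 else 0 := by
  rcases lt_or_ge k 0 with hk | hk
  · rw [if_neg hk.ne, recurrenceDefect]
    exact Finset.sum_eq_zero fun j _ => by rw [zeroExtend_of_neg (by omega), mul_zero]
  lift k to ℕ using hk
  have hbig : Finset.range (μ + 1) ⊆ Finset.range (μ + k + 1) := range_subset_range.2 (by omega)
  have hsmall : Finset.range (k + 1) ⊆ Finset.range (μ + k + 1) := range_subset_range.2 (by omega)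
  rw [recurrenceDefect, Finset.sum_subset hbig fun j _ hj => by
      rw [hc' j (by simp at hj; omega), zero_mul],
    ← Finset.sum_subset hsmall fun j _ hj => by
      rw [zeroExtend_of_neg (by simp at hj; omega), mul_zero],
    Finset.sum_congr rfl fun j hj => by
      rw [zeroExtend_natCast_sub (Nat.lt_succ_iff.mp (Finset.mem_range.mp hj))],
    hconv]
  simp

end Recurrence

section Shift

variable {μ : ℕ} {c' : ℕ → ℚ} {s : ℤ → ℚ}

theorem window_vecMul_M1mat (hc'0 : c' 0 = 1) {k : ℤ} (hk : recurrenceDefect μ c' s k = 0) :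
    window μ s k ᵥ* M1mat μ c' = window μ s (k + 1) := by
  ext j
  simp only [vecMul, dotProduct, M1mat, window, of_apply, mul_add, Finset.sum_add_distrib]
  by_cases hj : (j : ℕ) = 0
  · have hsuper : ∑ l : Fin μ, s (k - 1 - l) * (if (j : ℕ) = l + 1 then 1 else 0) = 0 :=
      Finset.sum_eq_zero fun l _ => by rw [if_neg (by omega), mul_zero]
    have hcol : ∑ l : Fin μ, s (k - 1 - l) * (if (j : ℕ) = 0 then -c' (l + 1) else 0) = s k := by
      rw [recurrenceDefect, Finset.sum_range_succ', hc'0, ← Fin.sum_univ_eq_sum_range] at hk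
      simp only [hj, if_true, mul_neg, Finset.sum_neg_distrib]
      push_cast at hk
      simp only [mul_comm (c' _), sub_add_eq_sub_sub_swap, sub_zero, one_mul] at hk
      linear_combination (-1 : ℚ) * hk
    rw [hsuper, hcol, add_zero, hj]
    simp
  · have hcol : ∑ l : Fin μ, s (k - 1 - l) * (if (j : ℕ) = 0 then -c' (l + 1) else 0) = 0 :=
      Finset.sum_eq_zero fun l _ => by rw [if_neg hj, mul_zero]
    have hj' : (j : ℕ) - 1 < μ := by omega
    rw [hcol, zero_add, Finset.sum_eq_single ⟨(j : ℕ) - 1, hj'⟩]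
    · rw [if_pos (by simp; omega), mul_one]
      congr 1
      push_cast [Nat.cast_sub (Nat.one_le_iff_ne_zero.mpr hj)]
      ring
    · intro l _ hl
      rw [if_neg (fun h => hl (Fin.ext (by simp; omega))), mul_zero]
    · simp

theorem window_vecMul_M1mat_pow (hc'0 : c' 0 = 1) (hs : ∀ k, recurrenceDefect μ c' s k = 0)
    (k : ℤ) (m : ℕ) : window μ s k ᵥ* M1mat μ c' ^ m = window μ s (k + m) := by
  induction m with
  | zero => simp
  | succ m ih =>
    rw [pow_succ, ← vecMul_vecMul, ih, window_vecMul_M1mat hc'0 (hs _)]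
    push_cast
    ring_nf

end Shift

theorem chiMat_mul_M1mat_pow {μ : ℕ} {c c' : ℕ → ℚ} {ε : ℚ} (hc'0 : c' 0 = 1)
    (hc' : ∀ j, μ < j → c' j = 0) (hpal : ∀ j ≤ μ, c' (μ - j) = ε * c' j)
    (hconv : ∀ K : ℕ, ∑ j ∈ range (K + 1), c' j * c (K - j) = if K = 0 then 1 else 0) :
    chiMat μ c * M1mat μ c' ^ μ = (-ε) • (chiMat μ c)ᵀ := by
  set s : ℤ → ℚ := fun m => zeroExtend c (-m) - ε * zeroExtend c (m - μ)
  have hs : ∀ k, recurrenceDefect μ c' s k = 0 := fun k => by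
    have hlin : recurrenceDefect μ c' s k = recurrenceDefect μ c' (fun m => zeroExtend c (-m)) k
        - ε * recurrenceDefect μ c' (fun m => zeroExtend c (m - μ)) k := by
      simp only [s, recurrenceDefect, mul_sub, Finset.sum_sub_distrib, Finset.mul_sum,
        mul_left_comm]
    rw [hlin, recurrenceDefect_comp_neg hpal, recurrenceDefect_comp_sub,
      recurrenceDefect_zeroExtend hc' hconv, recurrenceDefect_zeroExtend hc' hconv]
    rcases eq_or_ne k μ with rfl | hk
    · simp
    · rw [if_neg (by omega), if_neg (by omega)]
      ring
  have hrow : ∀ i : Fin μ, chiMat μ c i = window μ s (i + 1) := fun i => by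
    ext j
    simp only [chiMat_apply, window, s,
      zeroExtend_of_neg (show (i + 1 - 1 - j - μ : ℤ) < 0 by omega)]
    ring_nf
  have hrow' : ∀ i : Fin μ, window μ s (i + 1 + μ) = (-ε) • (chiMat μ c)ᵀ i := fun i => by
    ext j
    simp only [chiMat_apply, window, s, transpose_apply, Pi.smul_apply, smul_eq_mul,
      zeroExtend_of_neg (show (-(i + 1 + μ - 1 - j) : ℤ) < 0 by omega)]
    ring_nf
  funext i
  rw [mul_apply_eq_vecMul, hrow, window_vecMul_M1mat_pow hc'0 hs]
  exact hrow' i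

theorem PowerSeries.sum_range_coeff_mul_coeff_inv {K : Type*} [Field K] (φ : PowerSeries K)
    (h : PowerSeries.constantCoeff φ ≠ 0) (n : ℕ) :
    ∑ j ∈ range (n + 1), PowerSeries.coeff j φ * PowerSeries.coeff (n - j) φ⁻¹
      = if n = 0 then 1 else 0 := by
  rw [← Finset.Nat.sum_antidiagonal_eq_sum_range_succ
      (fun i j => PowerSeries.coeff i φ * PowerSeries.coeff j φ⁻¹),
    ← PowerSeries.coeff_mul, PowerSeries.mul_inv_cancel φ h, PowerSeries.coeff_one]

namespace Polynomial

theorem natDegree_one_sub_X_pow {R : Type*} [Ring R] [Nontrivial R] {d : ℕ} (hd : d ≠ 0) :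
    (1 - X ^ d : R[X]).natDegree = d := by
  rw [natDegree_sub_eq_right_of_natDegree_lt] <;> simp [Nat.pos_of_ne_zero hd]

theorem one_sub_X_pow_ne_zero {R : Type*} [Ring R] [Nontrivial R] {d : ℕ} (hd : d ≠ 0) :
    (1 - X ^ d : R[X]) ≠ 0 :=
  ne_zero_of_natDegree_gt (natDegree_one_sub_X_pow (R := R) hd ▸ Nat.pos_of_ne_zero hd)

theorem reflect_one_sub_X_pow {R : Type*} [Ring R] (d : ℕ) :
    reflect d (1 - X ^ d : R[X]) = -(1 - X ^ d) := by
  rw [reflect_sub, reflect_one, reflect_monomial, revAt_le le_rfl, Nat.sub_self, pow_zero, neg_sub]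

theorem reflect_natDegree_of_mul_eq_one_sub_X_pow {R : Type*} [CommRing R] [IsDomain R]
    {q r : R[X]} {d : ℕ} {ε : R} (h : q * r = 1 - X ^ d) (hd : d ≠ 0)
    (hq : reflect q.natDegree q = ε • q) (hε : ε * ε = 1) :
    reflect r.natDegree r = -ε • r := by
  have hqr : q * r ≠ 0 := h ▸ one_sub_X_pow_ne_zero hd
  have hdeg : q.natDegree + r.natDegree = d := by
    rw [← natDegree_mul (left_ne_zero_of_mul hqr) (right_ne_zero_of_mul hqr), h,
      natDegree_one_sub_X_pow hd]
  have key : q * (ε • reflect r.natDegree r) = q * -r := by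
    have := reflect_mul q r le_rfl le_rfl
    rw [hdeg, h, reflect_one_sub_X_pow, ← h, hq] at this
    rw [mul_smul_comm, ← smul_mul_assoc, ← this, mul_neg]
  have := congrArg (ε • ·) (mul_left_cancel₀ (left_ne_zero_of_mul hqr) key)
  simpa [smul_smul, hε] using this

end Polynomial

theorem chainD_dvd_succ (a : ℕ → ℕ) (k : ℕ) : chainD a k ∣ chainD a (k + 1) :=
  Finset.prod_dvd_prod_of_subset _ _ _ (Finset.Icc_subset_Icc_right k.le_succ)

theorem chainD_ne_zero {a : ℕ → ℕ} {n k : ℕ} (ha : ∀ i, 1 ≤ i → i ≤ n → a i ≠ 0) (hk : k ≤ n) :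
    chainD a k ≠ 0 :=
  Finset.prod_ne_zero_iff.mpr fun i hi => by
    rw [Finset.mem_Icc] at hi
    exact ha i hi.1 (hi.2.trans hk)

theorem chainPhi_zero (a : ℕ → ℕ) : chainPhi a 0 = 1 - RatFunc.X := by
  simp [chainPhi, chainD]

theorem chainPhi_succ (a : ℕ → ℕ) (k : ℕ) :
    chainPhi a (k + 1) = (1 - RatFunc.X ^ chainD a (k + 1)) * (chainPhi a k)⁻¹ := by
  rw [chainPhi, Finset.prod_range_succ, Nat.sub_self, pow_zero, zpow_one, mul_comm, chainPhi,
    ← Finset.prod_inv_distrib]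
  congr 1
  refine Finset.prod_congr rfl fun i hi => ?_
  rw [Nat.sub_add_comm (Nat.lt_succ_iff.mp (Finset.mem_range.mp hi)), pow_succ, mul_neg_one,
    _root_.zpow_neg]

theorem exists_polynomial_eq_chainPhi {a : ℕ → ℕ} {n : ℕ} (ha : ∀ i, 1 ≤ i → i ≤ n → a i ≠ 0)
    {k : ℕ} (hk : k ≤ n) :
    ∃ q : ℚ[X], algebraMap ℚ[X] (RatFunc ℚ) q = chainPhi a k ∧ q ∣ 1 - X ^ chainD a k ∧
      q.coeff 0 = 1 ∧ (q.natDegree : ℤ) = chainMu a k ∧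
      reflect q.natDegree q = (-1 : ℚ) ^ (k + 1) • q := by
  induction k with
  | zero =>
    have hdeg : (1 - X : ℚ[X]).natDegree = 1 := by
      simpa using natDegree_one_sub_X_pow (R := ℚ) one_ne_zero
    refine ⟨1 - X, by simp [chainPhi_zero], by simp [chainD], by simp, by simp [hdeg, chainMu], ?_⟩
    simp [hdeg]
  | succ k ih =>
    obtain ⟨q, hmap, hdvd, hq0, hqdeg, hqrefl⟩ := ih (by omega)
    have hd := chainD_ne_zero ha hk
    obtain ⟨d', hd'⟩ := chainD_dvd_succ a k
    obtain ⟨r, hr⟩ : q ∣ 1 - X ^ chainD a (k + 1) := by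
      refine hdvd.trans ?_
      rw [hd']
      simpa only [neg_sub] using
        neg_dvd.mpr (dvd_neg.mpr (pow_one_sub_dvd_pow_mul_sub_one (X : ℚ[X]) _ d'))
    have hq : q ≠ 0 := by rintro rfl; simp at hq0
    have hr' : r ≠ 0 := right_ne_zero_of_mul (hr ▸ one_sub_X_pow_ne_zero hd)
    refine ⟨r, ?_, Dvd.intro_left q hr.symm, ?_, ?_, ?_⟩
    · have hX : (1 - RatFunc.X ^ chainD a (k + 1) : RatFunc ℚ)
          = algebraMap ℚ[X] (RatFunc ℚ) (1 - X ^ chainD a (k + 1)) := by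
        simp [RatFunc.algebraMap_X]
      rw [chainPhi_succ, ← hmap, hX, hr, map_mul,
        mul_comm (algebraMap _ _ q), mul_inv_cancel_right₀ (RatFunc.algebraMap_ne_zero hq)]
    · simpa [hq0, hd.symm] using (congrArg (fun p : ℚ[X] => p.coeff 0) hr).symm
    · have := congrArg natDegree hr
      rw [natDegree_one_sub_X_pow hd, natDegree_mul hq hr'] at this
      simp only [chainMu]
      omega
    · rw [reflect_natDegree_of_mul_eq_one_sub_X_pow hr.symm hd hqrefl (by rw [← mul_pow]; norm_num)]
      ring_nf

theorem stmt_2_general (n : ℕ) (a : ℕ → ℕ) (ha : ∀ i, 1 ≤ i → i ≤ n → 2 ≤ a i)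
    (p : Polynomial ℚ)
    (hp : algebraMap (Polynomial ℚ) (RatFunc ℚ) p = chainPhi a n)
    (c : ℕ → ℚ)
    (hc : ∀ i, c i = PowerSeries.coeff i ((p : PowerSeries ℚ)⁻¹)) :
    chiMat (chainMu a n).toNat c * (M1mat (chainMu a n).toNat (fun i => p.coeff i)) ^ (chainMu a n).toNat
        = ((-1 : ℚ) ^ n) • (chiMat (chainMu a n).toNat c)ᵀ ∧
    IsUnit (chiMat (chainMu a n).toNat c) ∧
    (M1mat (chainMu a n).toNat (fun i => p.coeff i)) ^ (chainMu a n).toNat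
        = ((-1 : ℚ) ^ n) • ((chiMat (chainMu a n).toNat c)⁻¹ * (chiMat (chainMu a n).toNat c)ᵀ) := by
  obtain ⟨q, hq, -, hp0, hpdeg, hprefl⟩ :=
    exists_polynomial_eq_chainPhi (fun i h1 h2 => (ha i h1 h2).trans_lt' two_pos |>.ne') le_rfl
  obtain rfl : p = q := RatFunc.algebraMap_injective ℚ (hp.trans hq.symm)
  set μ := (chainMu a n).toNat
  have hμ : p.natDegree = μ := by omega
  have hconv (K : ℕ) : ∑ j ∈ range (K + 1), p.coeff j * c (K - j) = if K = 0 then 1 else 0 := by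
    simpa [hc] using PowerSeries.sum_range_coeff_mul_coeff_inv (p : PowerSeries ℚ) (by simp [hp0]) K
  have hpal (j : ℕ) (hj : j ≤ μ) : p.coeff (μ - j) = (-1) ^ (n + 1) * p.coeff j := by
    simpa [coeff_reflect, revAt_le hj, hμ] using congrArg (fun r : ℚ[X] => r.coeff j) hprefl
  have hmain : chiMat μ c * M1mat μ p.coeff ^ μ = (-1 : ℚ) ^ n • (chiMat μ c)ᵀ := by
    rw [chiMat_mul_M1mat_pow hp0 (fun j hj => coeff_eq_zero_of_natDegree_lt (hμ ▸ hj)) hpal hconv,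
      pow_succ, mul_neg_one, neg_neg]
  have hunit : IsUnit (chiMat μ c) :=
    isUnit_chiMat (right_ne_zero_of_mul_eq_one (by simpa using hconv 0))
  refine ⟨hmain, hunit, ?_⟩
  rw [← Matrix.mul_smul, ← hmain,
    nonsing_inv_mul_cancel_left _ _ ((isUnit_iff_isUnit_det _).mp hunit)]

/-- `χ_n · M₁^{μ̃_n} = (-1)^n · χ_nᵀ`; equivalently, `χ_n` being invertible,
`M₁^{μ̃_n} = (-1)^n · χ_n⁻¹ · χ_nᵀ`. -/
theorem stmt_2 (n : ℕ) (hn : 1 ≤ n) (a : ℕ → ℕ) (ha : ∀ i, 1 ≤ i → i ≤ n → 2 ≤ a i)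
    (p : Polynomial ℚ)
    (hp : algebraMap (Polynomial ℚ) (RatFunc ℚ) p = chainPhi a n)
    (c : ℕ → ℚ)
    (hc : ∀ i, c i = PowerSeries.coeff i ((p : PowerSeries ℚ)⁻¹)) :
    chiMat (chainMu a n).toNat c * (M1mat (chainMu a n).toNat (fun i => p.coeff i)) ^ (chainMu a n).toNat
        = ((-1 : ℚ) ^ n) • (chiMat (chainMu a n).toNat c)ᵀ ∧
    IsUnit (chiMat (chainMu a n).toNat c) ∧
    (M1mat (chainMu a n).toNat (fun i => p.coeff i)) ^ (chainMu a n).toNat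
        = ((-1 : ℚ) ^ n) • ((chiMat (chainMu a n).toNat c)⁻¹ * (chiMat (chainMu a n).toNat c)ᵀ) :=
  stmt_2_general n a ha p hp c hc
end

section
/- The matrix M_1 has finite order dividing d_n: M_1^{d_n} = 𝟏 (the identity matrix). -/
open Finset Matrix Polynomial FreeAbelianGroup

lemma chainD_zero (a : ℕ → ℕ) : chainD a 0 = 1 := by simp [chainD]

lemma chainD_succ (a : ℕ → ℕ) (k : ℕ) : chainD a (k+1) = chainD a k * a (k+1) := by
  simp [chainD, Finset.prod_Icc_succ_top (Nat.le_add_left 1 k)]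

lemma chainD_pos (a : ℕ → ℕ) {n : ℕ} (ha : ∀ i, 1 ≤ i → i ≤ n → 2 ≤ a i) :
    ∀ k, k ≤ n → 1 ≤ chainD a k := by
  intro k hk
  apply Finset.one_le_prod'
  intro i hi
  simp only [Finset.mem_Icc] at hi
  exact le_trans (by norm_num) (ha i hi.1 (le_trans hi.2 hk))

lemma phi_succ (a : ℕ → ℕ) (k : ℕ) :
    chainPhi a (k+1) = (chainPhi a k)⁻¹ * (1 - RatFunc.X ^ (chainD a (k+1))) := by
  unfold chainPhi
  rw [Finset.prod_range_succ]
  congr 1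
  · rw [← Finset.prod_inv_distrib]
    apply Finset.prod_congr rfl
    intro i hi
    have hik : i ≤ k := Nat.lt_succ_iff.mp (Finset.mem_range.mp hi)
    rw [show k + 1 - i = (k - i) + 1 from by omega, pow_succ, mul_neg_one, _root_.zpow_neg]
  · simp

/-- main induction -/
lemma phi_poly (a : ℕ → ℕ) (n : ℕ) (ha : ∀ i, 1 ≤ i → i ≤ n → 2 ≤ a i) :
    ∀ k, k ≤ n → ∃ P : Polynomial ℚ,
      algebraMap (Polynomial ℚ) (RatFunc ℚ) P = chainPhi a k ∧
      P.coeff 0 = 1 ∧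
      1 ≤ chainMu a k ∧ chainMu a k ≤ chainD a k ∧
      (P.natDegree : ℤ) = chainMu a k ∧
      P ∣ (X ^ (chainD a k) - 1) := by
  intro k
  induction k with
  | zero =>
    intro _
    refine ⟨1 - X, ?_, by simp, by norm_num [chainMu], by norm_num [chainMu, chainD_zero], ?_, ?_⟩
    · unfold chainPhi
      simp [chainD_zero, RatFunc.algebraMap_X]
    · have : (1 - X : Polynomial ℚ).natDegree = 1 := by
        rw [show (1 - X : Polynomial ℚ) = -(X ^ 1 - C 1) from by simp, natDegree_neg,
          natDegree_X_pow_sub_C]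
      rw [this]; rfl
    · rw [chainD_zero]
      exact ⟨-1, by ring⟩
  | succ k ih =>
    intro hk1
    obtain ⟨P, hmap, hc0, hmu1, hmud, hdeg, hdvd⟩ := ih (le_of_lt hk1)
    have hPne : P ≠ 0 := fun h => by simp [h] at hc0
    have hdk : 1 ≤ chainD a k := chainD_pos a ha k (le_of_lt hk1)
    have hdk1 : 1 ≤ chainD a (k+1) := chainD_pos a ha (k+1) hk1
    have hak : 2 ≤ a (k+1) := ha (k+1) (Nat.le_add_left 1 k) hk1
    have hdd : chainD a k * 2 ≤ chainD a (k+1) := by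
      rw [chainD_succ]; exact Nat.mul_le_mul_left _ hak
    -- divisibility of X^{d_{k+1}} - 1 by P
    have hdvd2 : P ∣ (X ^ (chainD a (k+1)) - 1 : Polynomial ℚ) := by
      refine hdvd.trans ?_
      have : (X ^ (chainD a (k+1)) - 1 : Polynomial ℚ)
          = (X ^ chainD a k) ^ (a (k+1)) - 1 ^ (a (k+1)) := by
        rw [← pow_mul, ← chainD_succ, one_pow]
      rw [this]
      exact sub_dvd_pow_sub_pow _ _ _
    obtain ⟨h, hh⟩ := hdvd2
    refine ⟨-h, ?_, ?_, ?_, ?_, ?_, ⟨-P, by rw [hh]; ring⟩⟩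
    · -- algebraMap (-h) = chainPhi a (k+1)
      rw [phi_succ, ← hmap]
      have hPne' : algebraMap (Polynomial ℚ) (RatFunc ℚ) P ≠ 0 := by
        simpa using hPne
      field_simp
      have : (algebraMap (Polynomial ℚ) (RatFunc ℚ)) h * (algebraMap (Polynomial ℚ) (RatFunc ℚ)) P
          = algebraMap (Polynomial ℚ) (RatFunc ℚ) (X ^ (chainD a (k+1)) - 1) := by
        rw [← _root_.map_mul, hh, mul_comm]
      rw [map_neg, neg_mul, this, map_sub, _root_.map_one, map_pow, RatFunc.algebraMap_X]
      ring
    · have h0 : h.coeff 0 = -1 := by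
        have := congrArg (fun q => Polynomial.coeff q 0) hh
        simp only [mul_coeff_zero, hc0, one_mul, coeff_sub, coeff_one, coeff_X_pow] at this
        rw [if_neg (by omega), if_pos trivial] at this
        linarith
      simp [h0]
    · simp only [chainMu]; omega
    · simp only [chainMu]; omega
    · have hhne : h ≠ 0 := by
        intro h0
        rw [h0, mul_zero, sub_eq_zero] at hh
        have := congrArg (fun q => Polynomial.coeff q 0) hh
        simp [coeff_X_pow] at this
        omega
      have hdegs : P.natDegree + h.natDegree = chainD a (k+1) := by
        rw [← natDegree_mul hPne hhne, ← hh]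
        rw [show (X ^ chainD a (k+1) - 1 : Polynomial ℚ) = X ^ chainD a (k+1) - C 1 from by simp]
        exact natDegree_X_pow_sub_C
      rw [natDegree_neg]
      simp only [chainMu]
      omega

lemma sum_mulVec' {μ : ℕ} {ι : Type*} (s : Finset ι) (A : ι → Matrix (Fin μ) (Fin μ) ℚ)
    (v : Fin μ → ℚ) : (∑ i ∈ s, A i) *ᵥ v = ∑ i ∈ s, (A i *ᵥ v) := by
  classical
  induction s using Finset.induction with
  | empty => simp [Matrix.zero_mulVec]
  | insert _ _ h ih => simp [Finset.sum_insert h, Matrix.add_mulVec, ih]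

lemma m1_single_pos {μ : ℕ} (c : ℕ → ℚ) (j : Fin μ) (hj : 0 < (j : ℕ)) :
    M1mat μ c *ᵥ Pi.single j 1 = Pi.single (⟨(j : ℕ) - 1, by omega⟩ : Fin μ) 1 := by
  funext i
  rw [Matrix.mulVec_single_one]; show M1mat μ c i j = _
  simp only [M1mat, Matrix.of_apply, Pi.single_apply, Fin.ext_iff]
  rw [if_neg (by omega), zero_add]
  by_cases h : (j : ℕ) = (i : ℕ) + 1
  · rw [if_pos h, if_pos (by omega)]
  · rw [if_neg h, if_neg (by omega)]

lemma m1_single_zero {μ : ℕ} (c : ℕ → ℚ) (h0 : 0 < μ) :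
    M1mat μ c *ᵥ Pi.single (⟨0, h0⟩ : Fin μ) 1 = fun i : Fin μ => -c (i.val + 1) := by
  funext i
  rw [Matrix.mulVec_single]
  simp [M1mat]

lemma m1_pow_single {μ : ℕ} (c : ℕ → ℚ) (h0 : 0 < μ) :
    ∀ k, k ≤ μ - 1 →
      (M1mat μ c) ^ k *ᵥ Pi.single (⟨μ - 1, by omega⟩ : Fin μ) 1
        = Pi.single (⟨μ - 1 - k, by omega⟩ : Fin μ) 1 := by
  intro k
  induction k with
  | zero => intro _; rw [pow_zero, Matrix.one_mulVec]; rfl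
  | succ k ih =>
    intro hk
    rw [pow_succ', ← Matrix.mulVec_mulVec, ih (by omega),
      m1_single_pos c _ (by show 0 < μ - 1 - k; omega)]
    congr 1

lemma single_congr {μ : ℕ} {x y : Fin μ} (h : (x : ℕ) = (y : ℕ)) :
    (Pi.single x 1 : Fin μ → ℚ) = Pi.single y 1 := by
  rw [show x = y from Fin.ext h]

lemma m1_pow_top {μ : ℕ} (c : ℕ → ℚ) (h0 : 0 < μ) :
    (M1mat μ c) ^ (μ - 1) *ᵥ Pi.single (⟨μ - 1, by omega⟩ : Fin μ) 1
      = Pi.single (⟨0, h0⟩ : Fin μ) 1 := by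
  rw [m1_pow_single c h0 (μ - 1) le_rfl]
  exact single_congr (show μ - 1 - (μ - 1) = 0 from by omega)

lemma aeval_reverse_M1 (p : Polynomial ℚ) (hc0 : p.coeff 0 = 1) (hd : 1 ≤ p.natDegree) :
    Polynomial.aeval (M1mat p.natDegree p.coeff) (reverse p) = 0 := by
  set μ := p.natDegree with hμ
  set M := M1mat μ p.coeff with hM
  have h0 : 0 < μ := hd
  have htd : p.natTrailingDegree = 0 :=
    natTrailingDegree_eq_zero.mpr (Or.inr (by rw [hc0]; norm_num))
  have hqdeg : (reverse p).natDegree = μ := by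
    rw [reverse_natDegree, htd, Nat.sub_zero]
  have hqc : ∀ k, k ≤ μ → (reverse p).coeff k = p.coeff (μ - k) := by
    intro k hk; rw [coeff_reverse, revAt_le (hμ ▸ hk)]
  have hMtop : M ^ μ *ᵥ Pi.single (⟨μ - 1, by omega⟩ : Fin μ) 1
      = fun i : Fin μ => -p.coeff (i.val + 1) := by
    have e : M ^ μ = M * M ^ (μ - 1) := by
      rw [← pow_succ']; congr 1; omega
    rw [e, ← Matrix.mulVec_mulVec, m1_pow_top p.coeff h0, m1_single_zero]
  have key : Polynomial.aeval M (reverse p) *ᵥ Pi.single (⟨μ - 1, by omega⟩ : Fin μ) 1 = 0 := by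
    rw [Polynomial.aeval_eq_sum_range' (n := μ + 1) (by omega), sum_mulVec']
    simp only [smul_mulVec]
    rw [Finset.sum_range_succ, hMtop, hqc μ le_rfl, Nat.sub_self, hc0,
      Finset.sum_congr rfl (fun k hk => by
        rw [m1_pow_single p.coeff h0 k (by have := Finset.mem_range.mp hk; omega)])]
    funext i
    have hi : i.val ≤ μ - 1 := by omega
    simp only [Pi.add_apply, Finset.sum_apply, Pi.smul_apply, Pi.single_apply, smul_eq_mul,
      one_smul, Pi.zero_apply]
    rw [Finset.sum_eq_single_of_mem (μ - 1 - i.val) (Finset.mem_range.mpr (by omega))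
      (fun b hb hbne => by
        rw [if_neg, mul_zero]
        intro hcon
        rw [Fin.ext_iff] at hcon
        simp only [Fin.val_mk] at hcon
        have := Finset.mem_range.mp hb
        omega)]
    rw [if_pos (Fin.ext (show (i : ℕ) = μ - 1 - (μ - 1 - (i : ℕ)) from by omega)), mul_one,
      hqc (μ - 1 - i.val) (by omega), show μ - (μ - 1 - i.val) = i.val + 1 from by omega]
    ring
  have all : ∀ j : Fin μ, Polynomial.aeval M (reverse p) *ᵥ Pi.single j 1 = 0 := by
    intro j
    have hj : Pi.single j (1 : ℚ) = M ^ (μ - 1 - j.val) *ᵥ Pi.single (⟨μ - 1, by omega⟩ : Fin μ) 1 := by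
      rw [m1_pow_single p.coeff h0 _ (by omega)]
      exact single_congr (show (j : ℕ) = μ - 1 - (μ - 1 - (j : ℕ)) from by
        have := j.isLt; omega)
    have hcomm : Polynomial.aeval M (reverse p) * M ^ (μ - 1 - j.val)
        = M ^ (μ - 1 - j.val) * Polynomial.aeval M (reverse p) := by
      calc Polynomial.aeval M (reverse p) * M ^ (μ - 1 - j.val)
          = Polynomial.aeval M (reverse p * X ^ (μ - 1 - j.val)) := by
            rw [_root_.map_mul, map_pow, aeval_X]
        _ = Polynomial.aeval M (X ^ (μ - 1 - j.val) * reverse p) := by rw [mul_comm]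
        _ = M ^ (μ - 1 - j.val) * Polynomial.aeval M (reverse p) := by
            rw [_root_.map_mul, map_pow, aeval_X]
    rw [hj, Matrix.mulVec_mulVec, hcomm, ← Matrix.mulVec_mulVec, key, Matrix.mulVec_zero]
  ext i j
  simpa [Matrix.mulVec_single] using congrFun (all j) i

lemma reverse_X_pow_sub_one {d : ℕ} (hd : 1 ≤ d) :
    reverse (X ^ d - 1 : Polynomial ℚ) = 1 - X ^ d := by
  have h1 : (X ^ d - 1 : Polynomial ℚ) = X ^ d - C 1 := by simp
  unfold reverse
  rw [h1, natDegree_X_pow_sub_C, reflect_sub, reflect_monomial, revAt_le le_rfl, Nat.sub_self,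
    pow_zero, reflect_C]
  simp

lemma M1_pow_eq_one (p : Polynomial ℚ) (hc0 : p.coeff 0 = 1) (h1 : 1 ≤ p.natDegree) (d : ℕ)
    (hdvd : p ∣ X ^ d - 1) (hd : 1 ≤ d) :
    (M1mat p.natDegree p.coeff) ^ d = 1 := by
  obtain ⟨h, hh⟩ := hdvd
  have hrev : reverse p * reverse h = 1 - X ^ d := by
    rw [← reverse_mul_of_domain, ← hh, reverse_X_pow_sub_one hd]
  have hg : (X ^ d - 1 : Polynomial ℚ) = reverse p * (-reverse h) := by
    rw [mul_neg, hrev]; ring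
  set M := M1mat p.natDegree p.coeff
  have h2 : Polynomial.aeval M (X ^ d - 1 : Polynomial ℚ) = 0 := by
    rw [hg, _root_.map_mul, aeval_reverse_M1 p hc0 h1, zero_mul]
  have e : M ^ d - 1 = 0 := by simpa using h2
  exact sub_eq_zero.mp e


/-- `M₁^{d_n} = 𝟏`, i.e. `M₁` has finite order dividing `d_n`. -/
theorem stmt_18 (n : ℕ) (hn : 1 ≤ n) (a : ℕ → ℕ) (ha : ∀ i, 1 ≤ i → i ≤ n → 2 ≤ a i)
    (p : Polynomial ℚ)
    (hp : algebraMap (Polynomial ℚ) (RatFunc ℚ) p = chainPhi a n) :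
    (M1mat (chainMu a n).toNat (fun i => p.coeff i)) ^ (chainD a n) = 1 := by
  obtain ⟨P, hmap, hc0, hmu1, hmud, hdeg, hdvd⟩ := phi_poly a n ha n le_rfl
  have hpP : p = P := IsFractionRing.injective (Polynomial ℚ) (RatFunc ℚ) (by rw [hp, hmap])
  have hdegn : p.natDegree = (chainMu a n).toNat := by rw [hpP]; omega
  have h1 : 1 ≤ p.natDegree := by omega
  have hd1 : 1 ≤ chainD a n := chainD_pos a ha n le_rfl
  have hdvd' : p ∣ X ^ chainD a n - 1 := hpP ▸ hdvd
  have hc0' : p.coeff 0 = 1 := by rw [hpP]; exact hc0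
  rw [show (chainMu a n).toNat = p.natDegree from hdegn.symm]
  exact M1_pow_eq_one p hc0' h1 (chainD a n) hdvd' hd1
end
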